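/- arXiv:2402.01078 — 9 statements merged into one kernel-verified Lean document; each statement's English description precedes it below -/
import Mathlib

section
/- Let (K i)_{i : ι} be a family of profinite groups and let K = Π i, K i carry the product topology. For any natural number m, there exists a nontrivial continuous homomorphism from K to Sym(m) if and only if there exists an index j such that K j admits a nontrivial continuous homomorphism to Sym(m). Formally: (∃ φ : (Π i, K i) →* Equiv.Perm (Fin m), Continuous φ ∧ φ ≠ 1) ↔ (∃ j, ∃ ψ : K j →* Equiv.Perm (Fin m), Continuous ψ ∧ ψ ≠ 1). -/
private lemma aux_phi_eq_one {ι : Type*} {K : ι → Type*} [∀ i, Group (K i)]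
    {G : Type*} [Group G] [DecidableEq ι]
    (φ : (Π i, K i) →* G) (I : Finset ι) :
    ∀ x : Π i, K i, (∀ i ∈ I, φ (Pi.mulSingle i (x i)) = 1) →
      (∀ i ∉ I, x i = 1) → φ x = 1 := by
  induction I using Finset.induction_on with
  | empty =>
    intro x _ h2
    have : x = 1 := funext fun i => h2 i (by simp)
    simp [this]
  | @insert a s ha ih =>
    intro x h1 h2
    have hx : x = Pi.mulSingle a (x a) * Function.update x a 1 := by
      ext i
      by_cases h : i = a
      · subst h; simp
      · simp [Pi.mulSingle_eq_of_ne h, Function.update_of_ne h]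
    rw [hx, map_mul, h1 a (Finset.mem_insert_self a s), one_mul]
    apply ih
    · intro i hi
      have hia : i ≠ a := fun h => ha (h ▸ hi)
      rw [Function.update_of_ne hia]
      exact h1 i (Finset.mem_insert_of_mem hi)
    · intro i hi
      by_cases h : i = a
      · subst h; simp
      · rw [Function.update_of_ne h]
        exact h2 i (by simp [h, hi])

/-- A product of profinite groups admits a nontrivial continuous homomorphism to `Sym(m)`
iff one of the factors does. -/
theorem product_has_nontrivial_continuous_hom_to_sym_iff_factor_does
    (ι : Type*) (K : ι → Type*) [∀ i, Group (K i)] [∀ i, TopologicalSpace (K i)]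
    [∀ i, IsTopologicalGroup (K i)] [∀ i, CompactSpace (K i)] [∀ i, T2Space (K i)]
    [∀ i, TotallyDisconnectedSpace (K i)] (m : ℕ)
    [TopologicalSpace (Equiv.Perm (Fin m))] [DiscreteTopology (Equiv.Perm (Fin m))] :
    (∃ φ : (Π i, K i) →* Equiv.Perm (Fin m), Continuous φ ∧ φ ≠ 1) ↔
      (∃ j, ∃ ψ : K j →* Equiv.Perm (Fin m), Continuous ψ ∧ ψ ≠ 1) := by
  classical
  constructor
  · rintro ⟨φ, hc, hne⟩
    by_contra hcon
    push_neg at hcon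
    -- every composed hom with a coordinate inclusion is trivial
    have hsingle : ∀ (i : ι) (g : K i), φ (Pi.mulSingle i g) = 1 := by
      intro i g
      have : φ.comp (MonoidHom.mulSingle K i) = 1 :=
        hcon i _ (hc.comp (continuous_mulSingle i))
      simpa using DFunLike.congr_fun this g
    -- get an element not in the kernel
    obtain ⟨x, hx⟩ : ∃ x, φ x ≠ 1 := by
      by_contra h
      push_neg at h
      exact hne (MonoidHom.ext fun x => h x)
    -- kernel is open
    have hopen : IsOpen (φ ⁻¹' {1}) := (isOpen_discrete _).preimage hc
    obtain ⟨I, u, hu, hsub⟩ := isOpen_pi_iff.mp hopen 1 (by simp)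
    set y : Π i, K i := fun i => if i ∈ I then x i else 1 with hy
    have hmem : x * y⁻¹ ∈ (I : Set ι).pi u := by
      intro i hi
      have : (x * y⁻¹) i = 1 := by simp [hy, Finset.mem_coe.mp hi]
      rw [this]
      simpa using (hu i hi).2
    have h1 : φ (x * y⁻¹) = 1 := hsub hmem
    have h2 : φ y = 1 := by
      apply aux_phi_eq_one φ I
      · intro i hi
        have : y i = x i := by simp [hy, hi]
        rw [this]; exact hsingle i (x i)
      · intro i hi; simp [hy, hi]
    have : φ x = 1 := by
      have hxy : x = (x * y⁻¹) * y := by group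
      rw [hxy, map_mul, h1, h2, one_mul]
    exact hx this
  · rintro ⟨j, ψ, hψc, hψne⟩
    refine ⟨ψ.comp (Pi.evalMonoidHom K j), hψc.comp (continuous_apply j), ?_⟩
    obtain ⟨g, hg⟩ : ∃ g, ψ g ≠ 1 := by
      by_contra h
      push_neg at h
      exact hψne (MonoidHom.ext fun g => h g)
    intro h
    apply hg
    have := DFunLike.congr_fun h (Pi.mulSingle j g)
    simpa using this
end

section
/- Let (K i)_{i : ι} be a family of profinite groups and let K = Π i, K i carry the product topology, and let m be a natural number. Then K has a proper open subgroup of index at most m if and only if there exists an index j such that K j has a proper open subgroup of index at most m. Formally: (∃ H : Subgroup (Π i, K i), IsOpen (H : Set _) ∧ 1 < H.index ∧ H.index ≤ m) ↔ (∃ j, ∃ H' : Subgroup (K j), IsOpen (H' : Set _) ∧ 1 < H'.index ∧ H'.index ≤ m). -/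
/-- A product of profinite groups has a proper open subgroup of index at most `m`
iff one of the factors does. -/
theorem product_has_small_open_subgroup_iff_factor_does
    (ι : Type*) (K : ι → Type*) [∀ i, Group (K i)] [∀ i, TopologicalSpace (K i)]
    [∀ i, IsTopologicalGroup (K i)] [∀ i, CompactSpace (K i)] [∀ i, T2Space (K i)]
    [∀ i, TotallyDisconnectedSpace (K i)] (m : ℕ) :
    (∃ H : Subgroup (Π i, K i), IsOpen (H : Set (Π i, K i)) ∧ 1 < H.index ∧ H.index ≤ m) ↔
      (∃ j, ∃ H' : Subgroup (K j), IsOpen (H' : Set (K j)) ∧ 1 < H'.index ∧ H'.index ≤ m) := by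
  classical
  constructor
  · rintro ⟨H, hHo, hH1, hHm⟩
    -- `H` is open, so it contains a basic open set around `1`, in particular it contains
    -- all elements supported outside a finite set `S`.
    have h1H : (1 : Π i, K i) ∈ H := H.one_mem
    have hnhds : (H : Set (Π i, K i)) ∈ nhds (1 : Π i, K i) := hHo.mem_nhds h1H
    rw [nhds_pi, Filter.mem_pi] at hnhds
    obtain ⟨S, hSfin, U, hU, hUsub⟩ := hnhds
    obtain ⟨S, rfl⟩ := hSfin.exists_finset_coe
    -- every element that is `1` on `S` lies in `H`
    have hT : ∀ g : Π i, K i, (∀ i ∈ S, g i = 1) → g ∈ H := by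
      intro g hg
      apply hUsub
      intro i hi
      have := hg i hi
      rw [this]
      exact mem_of_mem_nhds (hU i)
    -- the comap subgroups along the coordinate inclusions
    set Hj : ∀ j, Subgroup (K j) := fun j => H.comap (MonoidHom.mulSingle K j) with hHj
    -- some `j ∈ S` must have `Hj j ≠ ⊤`
    have hne : ∃ j ∈ S, Hj j ≠ ⊤ := by
      by_contra hcon
      push_neg at hcon
      have key : ∀ s : Finset ι, ↑s ⊆ ↑S → ∀ h : Π i, K i, (∀ i, i ∉ s → h i = 1) → h ∈ H := by
        intro s
        induction s using Finset.induction_on with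
        | empty =>
          intro _ h hh
          have : h = 1 := funext fun i => hh i (Finset.notMem_empty i)
          rw [this]; exact H.one_mem
        | @insert a s ha ih =>
          intro hsub h hh
          have haS : a ∈ S := by
            have := hsub (Finset.mem_insert_self a s)
            exact this
          have h1 : Pi.mulSingle a (h a) ∈ H := by
            have : Hj a = ⊤ := hcon a haS
            have : h a ∈ Hj a := this ▸ Subgroup.mem_top _
            exact this
          have h2 : Function.update h a 1 ∈ H := by
            apply ih (fun i hi => hsub (Finset.mem_insert_of_mem hi))
            intro i his
            by_cases hia : i = a
            · subst hia; simp
            · rw [Function.update_of_ne hia]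
              exact hh i (by simp [his, hia])
          have := H.mul_mem h1 h2
          convert this using 1
          funext i
          by_cases hia : i = a
          · subst hia; simp
          · simp [Function.update_of_ne hia, Pi.mulSingle_apply, hia]
      have hHtop : H = ⊤ := by
        rw [Subgroup.eq_top_iff']
        intro g
        have hg' : (fun i => if i ∈ S then 1 else g i) ∈ H := by
          apply hT
          intro i hi
          simp [hi]
        have hgS : (fun i => if i ∈ S then g i else 1) ∈ H := by
          apply key S (subset_refl _)
          intro i hi
          simp [hi]
        have := H.mul_mem hgS hg'
        convert this using 1
        funext i
        by_cases hi : i ∈ S <;> simp [hi]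
      rw [hHtop, Subgroup.index_top] at hH1
      exact absurd hH1 (lt_irrefl 1)
    obtain ⟨j, hjS, hjne⟩ := hne
    refine ⟨j, Hj j, ?_, ?_, ?_⟩
    · exact (hHo.preimage (continuous_mulSingle j))
    · have h0 : (Hj j).index ≠ 0 := by
        rw [hHj, Subgroup.index_comap]
        intro h
        have := Subgroup.index_eq_zero_of_relIndex_eq_zero h
        omega
      have h1 : (Hj j).index ≠ 1 := by
        rw [Ne, Subgroup.index_eq_one]
        exact hjne
      omega
    · have hle : (Hj j).index ≤ H.index := by
        rw [hHj, Subgroup.index_comap]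
        calc H.relIndex (MonoidHom.mulSingle K j).range
            ≤ H.relIndex ⊤ := by
              apply Subgroup.relIndex_le_of_le_right le_top
              rw [Subgroup.relIndex_top_right]
              omega
          _ = H.index := Subgroup.relIndex_top_right H
      omega
  · rintro ⟨j, H', hH'o, hH'1, hH'm⟩
    refine ⟨H'.comap (Pi.evalMonoidHom K j), ?_, ?_⟩
    · exact hH'o.preimage (continuous_apply j)
    · rw [Subgroup.index_comap_of_surjective _ (Function.surjective_eval j)]
      exact ⟨hH'1, hH'm⟩
end

section
/- Let G be a group and m ≥ 1 a natural number. Then G has a proper subgroup of finite index at most m if and only if the quotient G ⧸ frattini G has a proper subgroup of finite index at most m. Formally: (∃ H : Subgroup G, 1 < H.index ∧ H.index ≤ m) ↔ (∃ H' : Subgroup (G ⧸ frattini G), 1 < H'.index ∧ H'.index ≤ m). -/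
/-!
Every proper subgroup of finite index lies in a maximal subgroup of no larger index (a proper
subgroup above it of least index), and maximal subgroups contain the Frattini subgroup, so they
pass to `G ⧸ frattini G` with the same index. Conversely, preimages of subgroups of the quotient
keep their index.
-/

open Function

namespace Subgroup

variable {G : Type*} [Group G]

theorem exists_isCoatom_ge_index_le {H : Subgroup G} [H.FiniteIndex] (hH : H ≠ ⊤) :
    ∃ M : Subgroup G, IsCoatom M ∧ H ≤ M ∧ M.index ≤ H.index := by
  obtain ⟨M, ⟨hHM, hM⟩, hmin⟩ := (measure (index (G := G))).wf.has_min
    {K | H ≤ K ∧ K ≠ ⊤} ⟨H, le_rfl, hH⟩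
  have : M.FiniteIndex := finiteIndex_of_le hHM
  refine ⟨M, ⟨hM, fun K hMK => ?_⟩, hHM, ?_⟩
  · by_contra hK
    exact hmin K ⟨hHM.trans hMK.le, hK⟩ (index_strictAnti hMK)
  · exact not_lt.mp (hmin H ⟨le_rfl, hH⟩)

end Subgroup

open Subgroup

theorem exists_one_lt_index_le_iff_of_surjective {G G' : Type*} [Group G] [Group G']
    {f : G →* G'} (hf : Surjective f) (hker : f.ker ≤ frattini G) (m : ℕ) :
    (∃ H : Subgroup G, 1 < H.index ∧ H.index ≤ m) ↔
      (∃ H' : Subgroup G', 1 < H'.index ∧ H'.index ≤ m) := by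
  constructor
  · rintro ⟨H, hH1, hHm⟩
    have : H.FiniteIndex := ⟨by omega⟩
    obtain ⟨M, hM, hHM, hMH⟩ :=
      exists_isCoatom_ge_index_le (mt index_eq_one.mpr hH1.ne')
    have : M.FiniteIndex := finiteIndex_of_le hHM
    have hMap : (M.map f).index = M.index :=
      index_map_eq M hf (hker.trans (frattini_le_coatom hM))
    refine ⟨M.map f, ?_, ?_⟩
    · rw [hMap]
      exact one_lt_index_of_ne_top hM.1
    · rw [hMap]
      exact hMH.trans hHm
  · rintro ⟨H', hH'⟩
    exact ⟨H'.comap f, by rwa [index_comap_of_surjective H' hf]⟩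

theorem small_index_subgroup_iff_frattini_quotient_general
    (G : Type*) [Group G] (m : ℕ) :
    (∃ H : Subgroup G, 1 < H.index ∧ H.index ≤ m) ↔
      (∃ H' : Subgroup (G ⧸ frattini G), 1 < H'.index ∧ H'.index ≤ m) :=
  exists_one_lt_index_le_iff_of_surjective (QuotientGroup.mk'_surjective _)
    (QuotientGroup.ker_mk' _).le m

/-- A group `G` has a proper subgroup of finite index at most `m` iff the quotient of `G`
by its Frattini subgroup has one. -/
theorem small_index_subgroup_iff_frattini_quotient
    (G : Type*) [Group G] (m : ℕ) (hm : 1 ≤ m) :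
    (∃ H : Subgroup G, 1 < H.index ∧ H.index ≤ m) ↔
      (∃ H' : Subgroup (G ⧸ frattini G), 1 < H'.index ∧ H'.index ≤ m) :=
  small_index_subgroup_iff_frattini_quotient_general G m
end

section
/- Let 𝕂 be a field, V a finite-dimensional 𝕂-vector space, and B a nondegenerate alternating bilinear form on V. Let v be an isotropic subspace of V, let W = v^⊥ be its orthogonal complement (so v ≤ W), let v̄ denote v regarded as a submodule of W, and let π : W → W ⧸ v̄ be the canonical projection. Then there exists a bilinear form B' on the quotient W ⧸ v̄ satisfying B' (π x) (π y) = B x y for all x, y ∈ W; moreover B' is alternating and nondegenerate. -/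
open LinearMap (BilinForm)

/-- Given a nondegenerate alternating bilinear form `B` on a finite-dimensional space `V`
and an isotropic subspace `v`, the form descends to a well-defined, alternating,
nondegenerate bilinear form on `v^⊥ ⧸ v`. -/
theorem exists_induced_form_on_orthogonal_quotient
    (𝕂 : Type*) [Field 𝕂] (V : Type*) [AddCommGroup V] [Module 𝕂 V]
    [FiniteDimensional 𝕂 V] (B : BilinForm 𝕂 V)
    (halt : ∀ x : V, B x x = 0) (hnd : B.Nondegenerate)
    (v : Submodule 𝕂 V) (hiso : ∀ x ∈ v, ∀ y ∈ v, B x y = 0) :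
    v ≤ B.orthogonal v ∧
    ∃ B' : BilinForm 𝕂 ((B.orthogonal v) ⧸ (v.comap (B.orthogonal v).subtype)),
      (∀ x y : B.orthogonal v,
        B' (Submodule.Quotient.mk x) (Submodule.Quotient.mk y) = B x y) ∧
      (∀ z, B' z z = 0) ∧ B'.Nondegenerate := by
  have hAlt : B.IsAlt := halt
  have hRefl : B.IsRefl := hAlt.isRefl
  set W := B.orthogonal v with hW
  set N := v.comap W.subtype with hN
  have hle : v ≤ W := fun x hx => fun n hn => hiso n hn x hx
  refine ⟨hle, ?_⟩
  -- restricted form on W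
  set f : BilinForm 𝕂 W := B.restrict W with hf
  -- f vanishes when either argument is in N
  have hker1 : ∀ n : W, n ∈ N → f n = 0 := by
    intro n hn
    ext y
    exact y.2 n.1 hn
  have hker2 : ∀ (x : W) (n : W), n ∈ N → f x n = 0 := by
    intro x n hn
    exact hRefl _ _ (x.2 n.1 hn)
  have h1 : N ≤ LinearMap.ker f := fun n hn => hker1 n hn
  set g : (W ⧸ N) →ₗ[𝕂] W →ₗ[𝕂] 𝕂 := N.liftQ f h1 with hg
  have h2 : N ≤ LinearMap.ker g.flip := by
    intro n hn
    ext z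
    simpa [g, f] using hker2 z n hn
  set B' : BilinForm 𝕂 (W ⧸ N) := (N.liftQ g.flip h2).flip with hB'
  have hB'mk : ∀ x y : W,
      B' (Submodule.Quotient.mk x) (Submodule.Quotient.mk y) = B x y := by
    intro x y
    simp [B', g, f]
  refine ⟨B', hB'mk, ?_, ?_⟩
  · intro z
    induction z using Submodule.Quotient.induction_on with
    | _ x => simpa [hB'mk] using halt x
  · refine LinearMap.BilinForm.Nondegenerate.ofSeparatingLeft ?_
    intro z hz
    induction z using Submodule.Quotient.induction_on with
    | _ x =>
      rw [Submodule.Quotient.mk_eq_zero]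
      -- x ∈ W with B x y = 0 for all y ∈ W, so x ∈ W^⊥ = v
      have hx : (x : V) ∈ B.orthogonal W := by
        intro y hy
        have := hz (Submodule.Quotient.mk ⟨y, hy⟩)
        rw [hB'mk] at this
        exact hRefl _ _ this
      show (x : V) ∈ v
      exact LinearMap.BilinForm.orthogonal_orthogonal hnd hRefl v ▸ hx
end

section
/- Let 𝕂 be a field and V a 𝕂-vector space with finrank V = 2g, equipped with a nondegenerate alternating bilinear form B. Let i ≤ j ≤ g be positive integers, and let v₁, v₂ be isotropic subspaces with finrank v₁ = finrank v₂ = i such that finrank (v₁ ⊔ v₂) ≤ j. Then there exist isotropic subspaces u₁, u₂ with finrank u₁ = finrank u₂ = j and an isotropic subspace v with finrank v = i such that v₁ ≤ u₁, v ≤ u₁, v ≤ u₂, and v₂ ≤ u₂. -/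
open LinearMap (BilinForm)
open Module

section Aux

variable {𝕂 : Type*} [Field 𝕂] {V : Type*} [AddCommGroup V] [Module 𝕂 V]

private lemma sup_isotropic_aux (B : BilinForm 𝕂 V) (hrefl : B.IsRefl) {S T : Submodule 𝕂 V}
    (hS : ∀ x ∈ S, ∀ y ∈ S, B x y = 0) (hT : ∀ x ∈ T, ∀ y ∈ T, B x y = 0)
    (hST : ∀ x ∈ S, ∀ y ∈ T, B x y = 0) :
    ∀ x ∈ S ⊔ T, ∀ y ∈ S ⊔ T, B x y = 0 := by
  intro x hx y hy
  obtain ⟨a, ha, b, hb, rfl⟩ := Submodule.mem_sup.mp hx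
  obtain ⟨c, hc, d, hd, rfl⟩ := Submodule.mem_sup.mp hy
  have hbc : B b c = 0 := hrefl c b (hST c hc b hb)
  simp only [map_add, LinearMap.add_apply, hS a ha c hc, hT b hb d hd,
    hST a ha d hd, hbc, add_zero]

private lemma extend_isotropic_aux (B : BilinForm 𝕂 V) [FiniteDimensional 𝕂 V]
    (halt : ∀ x : V, B x x = 0) (hnd : B.Nondegenerate)
    (W : Submodule 𝕂 V) (n c : ℕ) (hnc : 2 * n + c ≤ finrank 𝕂 V + 1) :
    ∀ k (S : Submodule 𝕂 V), n - finrank 𝕂 S = k → finrank 𝕂 S ≤ n →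
      (∀ x ∈ S, ∀ y ∈ S, B x y = 0) → (∀ x ∈ W, ∀ y ∈ S, B x y = 0) →
      finrank 𝕂 ↥(W ⊔ S) ≤ finrank 𝕂 S + c →
      ∃ S' : Submodule 𝕂 V, S ≤ S' ∧ finrank 𝕂 S' = n ∧
        (∀ x ∈ S', ∀ y ∈ S', B x y = 0) ∧ (∀ x ∈ W, ∀ y ∈ S', B x y = 0) := by
  have halt' : B.IsAlt := halt
  have hrefl : B.IsRefl := halt'.isRefl
  intro k
  induction k with
  | zero =>
    intro S h0 hle hiso horth _
    exact ⟨S, le_refl _, by omega, hiso, horth⟩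
  | succ k ih =>
    intro S hk hle hiso horth hWS
    have hlt : finrank 𝕂 S < n := by omega
    have hWSle : finrank 𝕂 ↥(W ⊔ S) ≤ finrank 𝕂 V := Submodule.finrank_le _
    have horthdim : finrank 𝕂 ↥(B.orthogonal (W ⊔ S)) =
        finrank 𝕂 V - finrank 𝕂 ↥(W ⊔ S) :=
      LinearMap.BilinForm.finrank_orthogonal hnd _
    have hnotle : ¬ (B.orthogonal (W ⊔ S) ≤ S) := by
      intro hle'
      have := Submodule.finrank_mono hle'
      omega
    obtain ⟨x, hxorth, hxS⟩ := SetLike.not_le_iff_exists.mp hnotle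
    have hx0 : x ≠ 0 := fun h => hxS (h ▸ S.zero_mem)
    have hxorth' : ∀ y ∈ W ⊔ S, B y x = 0 := fun y hy => hxorth y hy
    set S' : Submodule 𝕂 V := S ⊔ (𝕂 ∙ x) with hS'
    have hSS' : S ≤ S' := le_sup_left
    have hxS' : x ∈ S' := Submodule.mem_sup_right (Submodule.mem_span_singleton_self x)
    -- dimension of S'
    have hspan : finrank 𝕂 ↥(𝕂 ∙ x) = 1 := finrank_span_singleton hx0
    have hsum := Submodule.finrank_sup_add_finrank_inf_eq S (𝕂 ∙ x)
    rw [← hS'] at hsum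
    have hlt' : S < S' := lt_of_le_of_ne hSS' (fun h => hxS (h ▸ hxS'))
    have hdimlt : finrank 𝕂 S < finrank 𝕂 S' := Submodule.finrank_lt_finrank_of_lt hlt'
    have hdS' : finrank 𝕂 S' = finrank 𝕂 S + 1 := by omega
    -- isotropy of S'
    have hTiso : ∀ a ∈ (𝕂 ∙ x), ∀ b ∈ (𝕂 ∙ x), B a b = 0 := by
      intro a ha b hb
      obtain ⟨s, rfl⟩ := Submodule.mem_span_singleton.mp ha
      obtain ⟨t, rfl⟩ := Submodule.mem_span_singleton.mp hb
      simp [halt x]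
    have hSTorth : ∀ a ∈ S, ∀ b ∈ (𝕂 ∙ x), B a b = 0 := by
      intro a ha b hb
      obtain ⟨t, rfl⟩ := Submodule.mem_span_singleton.mp hb
      have : B a x = 0 := hxorth a (Submodule.mem_sup_right ha)
      simp [this]
    have hiso' : ∀ a ∈ S', ∀ b ∈ S', B a b = 0 :=
      sup_isotropic_aux B hrefl hiso hTiso hSTorth
    -- orthogonality to W
    have horth' : ∀ w ∈ W, ∀ y ∈ S', B w y = 0 := by
      intro w hw y hy
      obtain ⟨a, ha, b, hb, rfl⟩ := Submodule.mem_sup.mp hy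
      obtain ⟨t, rfl⟩ := Submodule.mem_span_singleton.mp hb
      have h1 : B w a = 0 := horth w hw a ha
      have h2 : B w x = 0 := hxorth w (Submodule.mem_sup_left hw)
      simp [h1, h2]
    -- dimension bound for W ⊔ S'
    have hWS' : finrank 𝕂 ↥(W ⊔ S') ≤ finrank 𝕂 S' + c := by
      have h1 : W ⊔ S' = (W ⊔ S) ⊔ (𝕂 ∙ x) := by rw [hS', sup_assoc]
      have h2 := Submodule.finrank_sup_add_finrank_inf_eq (W ⊔ S) (𝕂 ∙ x)
      rw [h1]; omega
    obtain ⟨S'', hle'', hrank'', hiso'', horth''⟩ :=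
      ih S' (by omega) (by omega) hiso' horth' hWS'
    exact ⟨S'', hSS'.trans hle'', hrank'', hiso'', horth''⟩

end Aux

/-- In a `2g`-dimensional symplectic space, any two `i`-dimensional isotropic subspaces
whose sum has dimension at most `j` (with `i ≤ j ≤ g`) are connected by a path of length 4
in the containment graph on isotropic subspaces of dimensions `i` and `j`. -/
theorem isotropic_subspaces_distance_four
    (𝕂 : Type*) [Field 𝕂] (V : Type*) [AddCommGroup V] [Module 𝕂 V]
    (g : ℕ) (hdim : finrank 𝕂 V = 2 * g) (B : BilinForm 𝕂 V)
    (halt : ∀ x : V, B x x = 0) (hnd : B.Nondegenerate)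
    (i j : ℕ) (hi : 1 ≤ i) (hij : i ≤ j) (hjg : j ≤ g)
    (v₁ v₂ : Submodule 𝕂 V)
    (hv₁ : ∀ x ∈ v₁, ∀ y ∈ v₁, B x y = 0) (hv₂ : ∀ x ∈ v₂, ∀ y ∈ v₂, B x y = 0)
    (hd₁ : finrank 𝕂 v₁ = i) (hd₂ : finrank 𝕂 v₂ = i)
    (hsum : finrank 𝕂 ↥(v₁ ⊔ v₂) ≤ j) :
    ∃ u₁ u₂ v : Submodule 𝕂 V,
      (∀ x ∈ u₁, ∀ y ∈ u₁, B x y = 0) ∧ (∀ x ∈ u₂, ∀ y ∈ u₂, B x y = 0) ∧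
      (∀ x ∈ v, ∀ y ∈ v, B x y = 0) ∧
      finrank 𝕂 u₁ = j ∧ finrank 𝕂 u₂ = j ∧ finrank 𝕂 v = i ∧
      v₁ ≤ u₁ ∧ v ≤ u₁ ∧ v ≤ u₂ ∧ v₂ ≤ u₂ := by
  have halt' : B.IsAlt := halt
  have hrefl : B.IsRefl := halt'.isRefl
  have hg : 1 ≤ g := le_trans (le_trans hi hij) hjg
  haveI : FiniteDimensional 𝕂 V :=
    FiniteDimensional.of_finrank_pos (by omega)
  set W : Submodule 𝕂 V := v₁ ⊔ v₂ with hW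
  set t : Submodule 𝕂 V := v₁ ⊓ v₂ with ht
  set m : ℕ := finrank 𝕂 ↥W with hm
  set d : ℕ := finrank 𝕂 ↥t with hd
  have hmd : m + d = i + i := by
    rw [hm, hd, hW, ht, Submodule.finrank_sup_add_finrank_inf_eq, hd₁, hd₂]
  have him : i ≤ m := hd₁ ▸ Submodule.finrank_mono (le_sup_left : v₁ ≤ W)
  -- t is isotropic and orthogonal to W
  have htiso : ∀ x ∈ t, ∀ y ∈ t, B x y = 0 := fun x hx y hy =>
    hv₁ x hx.1 y hy.1
  have htorth : ∀ w ∈ W, ∀ y ∈ t, B w y = 0 := by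
    intro w hw y hy
    obtain ⟨a, ha, b, hb, rfl⟩ := Submodule.mem_sup.mp hw
    have h1 : B a y = 0 := hv₁ a ha y hy.1
    have h2 : B b y = 0 := hv₂ b hb y hy.2
    simp [LinearMap.add_apply, h1, h2]
  have htW : t ≤ W := le_trans inf_le_left le_sup_left
  have hWt : W ⊔ t = W := sup_eq_left.mpr htW
  -- build v : isotropic of dim i containing t inside W^⊥
  obtain ⟨v, htv, hdv, hviso, hvorth⟩ :=
    extend_isotropic_aux B halt hnd W i (m - d)
      (by omega) (i - d) t rfl (by omega) htiso htorth (by rw [hWt]; omega)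
  -- v₁ ⊔ v is isotropic of dim ≤ j
  have hv₁v : ∀ x ∈ v₁, ∀ y ∈ v, B x y = 0 := fun x hx y hy =>
    hvorth x (Submodule.mem_sup_left hx) y hy
  have hv₂v : ∀ x ∈ v₂, ∀ y ∈ v, B x y = 0 := fun x hx y hy =>
    hvorth x (Submodule.mem_sup_right hx) y hy
  have hS₁iso : ∀ x ∈ v₁ ⊔ v, ∀ y ∈ v₁ ⊔ v, B x y = 0 :=
    sup_isotropic_aux B hrefl hv₁ hviso hv₁v
  have hS₂iso : ∀ x ∈ v₂ ⊔ v, ∀ y ∈ v₂ ⊔ v, B x y = 0 :=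
    sup_isotropic_aux B hrefl hv₂ hviso hv₂v
  have htv₁ : t ≤ v₁ ⊓ v := le_inf inf_le_left htv
  have htv₂ : t ≤ v₂ ⊓ v := le_inf inf_le_right htv
  have hd1v : d ≤ finrank 𝕂 ↥(v₁ ⊓ v) := Submodule.finrank_mono htv₁
  have hd2v : d ≤ finrank 𝕂 ↥(v₂ ⊓ v) := Submodule.finrank_mono htv₂
  have hs1 := Submodule.finrank_sup_add_finrank_inf_eq v₁ v
  have hs2 := Submodule.finrank_sup_add_finrank_inf_eq v₂ v
  have hS₁dim : finrank 𝕂 ↥(v₁ ⊔ v) ≤ j := by omega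
  have hS₂dim : finrank 𝕂 ↥(v₂ ⊔ v) ≤ j := by omega
  have hbotorth : ∀ S : Submodule 𝕂 V, ∀ w ∈ (⊥ : Submodule 𝕂 V), ∀ y ∈ S, B w y = 0 := by
    intro S w hw y _
    rw [Submodule.mem_bot] at hw
    simp [hw]
  -- extend v₁ ⊔ v to u₁ of dim j
  obtain ⟨u₁, hle₁, hrank₁, hiso₁, _⟩ :=
    extend_isotropic_aux B halt hnd ⊥ j 0 (by omega)
      (j - finrank 𝕂 ↥(v₁ ⊔ v)) (v₁ ⊔ v) rfl hS₁dim hS₁iso (hbotorth _)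
      (by rw [bot_sup_eq]; omega)
  obtain ⟨u₂, hle₂, hrank₂, hiso₂, _⟩ :=
    extend_isotropic_aux B halt hnd ⊥ j 0 (by omega)
      (j - finrank 𝕂 ↥(v₂ ⊔ v)) (v₂ ⊔ v) rfl hS₂dim hS₂iso (hbotorth _)
      (by rw [bot_sup_eq]; omega)
  exact ⟨u₁, u₂, v, hiso₁, hiso₂, hviso, hrank₁, hrank₂, hdv,
    le_trans le_sup_left hle₁, le_trans le_sup_right hle₁,
    le_trans le_sup_right hle₂, le_trans le_sup_left hle₂⟩
end

section
/- Fix a prime p and an integer g ≥ 1. Let V = (Fin g ⊕ Fin g) → ℚ_[p], and let B be the standard symplectic form on V, defined by B x y = Σ_{i : Fin g} ( x (Sum.inl i) · y (Sum.inr i) − x (Sum.inr i) · y (Sum.inl i) ). Call a ℤ_[p]-submodule L of V a primitive lattice if there exist families e, f : Fin g → V satisfying B (e i) (e j) = 0, B (f i) (f j) = 0 and B (e i) (f j) = (if i = j then 1 else 0) for all i, j, such that L is the ℤ_[p]-span of (Set.range e) ∪ (Set.range f). Then no primitive lattice strictly contains another: if L₁ and L₂ are primitive lattices with L₁ ≤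 L₂, then L₁ = L₂. -/
open scoped BigOperators

/-- The standard symplectic form on `ℚ_[p]^{2g}`. -/
noncomputable def standardSymplecticForm (p : ℕ) [Fact p.Prime] (g : ℕ)
    (x y : (Fin g ⊕ Fin g) → ℚ_[p]) : ℚ_[p] :=
  ∑ i : Fin g, (x (Sum.inl i) * y (Sum.inr i) - x (Sum.inr i) * y (Sum.inl i))

/-- A `ℤ_[p]`-lattice in `ℚ_[p]^{2g}` is primitive if it is spanned by a symplectic basis. -/
def IsPrimitiveLattice (p : ℕ) [Fact p.Prime] (g : ℕ)
    (L : Submodule ℤ_[p] ((Fin g ⊕ Fin g) → ℚ_[p])) : Prop :=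
  ∃ e f : Fin g → ((Fin g ⊕ Fin g) → ℚ_[p]),
    (∀ i j, standardSymplecticForm p g (e i) (e j) = 0) ∧
    (∀ i j, standardSymplecticForm p g (f i) (f j) = 0) ∧
    (∀ i j, standardSymplecticForm p g (e i) (f j) = if i = j then 1 else 0) ∧
    L = Submodule.span ℤ_[p] (Set.range e ∪ Set.range f)

/-!
A primitive lattice `L` is self-dual for `B`: `B` is `ℤ_[p]`-valued on its symplectic basis
`(e, f)`, hence on `L`, so `L ⊆ L^∨`; conversely `(f, -e)` is the `B`-dual basis of `(e, f)`, so the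
coordinates of any `x ∈ L^∨` in the basis `(e, f)` are values of `B` on `L`, hence integral.
Since `L ↦ L^∨` reverses inclusions, `L₁ ≤ L₂` gives `L₂ = L₂^∨ ≤ L₁^∨ = L₁`.
-/

open Module
open LinearMap (BilinForm)

theorem LinearIndependent.of_apply_eq_ite {R M N ι : Type*} [CommRing R] [AddCommGroup M]
    [Module R M] [AddCommGroup N] [Module R N] [Finite ι] [DecidableEq ι]
    (B : M →ₗ[R] N →ₗ[R] R) {v : ι → M} {w : ι → N}
    (h : ∀ i j, B (v i) (w j) = if i = j then 1 else 0) : LinearIndependent R v := by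
  refine .of_comp (LinearMap.pi fun j => B.flip (w j)) ?_
  convert! Pi.linearIndependent_single_one ι R with i
  ext j
  simp [h, Pi.single_apply, eq_comm]

namespace LinearMap.BilinForm

variable {R K M : Type*} [CommRing R] [Field K] [Algebra R K] [AddCommGroup M] [Module K M]
  [Module R M] [IsScalarTower R K M] (B : BilinForm K M)

theorem dualSubmodule_anti {N₁ N₂ : Submodule R M} (h : N₁ ≤ N₂) :
    B.dualSubmodule N₂ ≤ B.dualSubmodule N₁ :=
  fun _ hx y hy => hx y (h hy)

theorem span_le_dualSubmodule_span {S T : Set M}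
    (h : ∀ s ∈ S, ∀ t ∈ T, B s t ∈ (1 : Submodule R K)) :
    Submodule.span R S ≤ B.dualSubmodule (Submodule.span R T) :=
  Submodule.span_le.2 fun s hs _ hy =>
    (Submodule.span_le (p := (1 : Submodule R K).comap ((B s).restrictScalars R))).2
      (h s hs) hy

theorem dualSubmodule_le_span_of_apply_eq_ite {ι : Type*} [Fintype ι] [DecidableEq ι]
    {v w : ι → M} (hv : Submodule.span K (Set.range v) = ⊤)
    (h : ∀ i j, B (v i) (w j) = if i = j then 1 else 0)
    {N : Submodule R M} (hw : ∀ j, w j ∈ N) :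
    B.dualSubmodule N ≤ Submodule.span R (Set.range v) := by
  intro x hx
  obtain ⟨c, rfl⟩ :=
    (Submodule.mem_span_range_iff_exists_fun K).1 (hv ▸ Submodule.mem_top (x := x))
  have hc : ∀ j, B (∑ i, c i • v i) (w j) = c j := by
    simp [map_sum, h]
  choose r hr using fun j => Submodule.mem_one.1 (hc j ▸ hx (w j) (hw j))
  have : ∑ i, c i • v i = ∑ i, r i • v i := by simp [← hr, algebraMap_smul]
  rw [this]
  exact (Submodule.mem_span_range_iff_exists_fun R).2 ⟨r, rfl⟩

theorem dualSubmodule_span_symplecticBasis {ι : Type*} [Fintype ι] [DecidableEq ι]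
    [FiniteDimensional K M] (hB : B.IsAlt) (hdim : finrank K M = 2 * Fintype.card ι)
    {e f : ι → M} (hee : ∀ i j, B (e i) (e j) = 0) (hff : ∀ i j, B (f i) (f j) = 0)
    (hef : ∀ i j, B (e i) (f j) = if i = j then 1 else 0) :
    B.dualSubmodule (Submodule.span R (Set.range e ∪ Set.range f)) =
      Submodule.span R (Set.range e ∪ Set.range f) := by
  have hfe : ∀ i j, B (f i) (e j) = -if j = i then 1 else 0 := fun i j => by
    rw [← hB.neg_eq (e j) (f i), hef]
  let v := Sum.elim e f
  let w := Sum.elim f (-e)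
  have hvw : ∀ a b, B (v a) (w b) = if a = b then 1 else 0 := by
    rintro (i | i) (j | j) <;> simp [v, w, hee, hff, hef, hfe, eq_comm]
  have hv : Submodule.span K (Set.range v) = ⊤ :=
    (LinearIndependent.of_apply_eq_ite B hvw).span_eq_top_of_card_eq_finrank'
      (by simp [hdim, two_mul])
  rw [← Set.Sum.elim_range]
  refine le_antisymm (B.dualSubmodule_le_span_of_apply_eq_ite hv hvw ?_) ?_
  · rintro (j | j)
    · exact Submodule.subset_span ⟨.inr j, rfl⟩
    · exact neg_mem (Submodule.subset_span ⟨.inl j, rfl⟩)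
  · refine B.span_le_dualSubmodule_span ?_
    rintro _ ⟨i | i, rfl⟩ _ ⟨j | j, rfl⟩ <;>
      simp only [Sum.elim_inl, Sum.elim_inr, hee, hff, hef, hfe, neg_mem_iff, zero_mem] <;>
      split_ifs <;> simp [← Submodule.one_le]

end LinearMap.BilinForm

section Padic

variable (p : ℕ) [Fact p.Prime] (g : ℕ)

noncomputable def standardSymplecticBilinForm : BilinForm ℚ_[p] ((Fin g ⊕ Fin g) → ℚ_[p]) := by
  refine LinearMap.mk₂ ℚ_[p] (standardSymplecticForm p g) ?_ ?_ ?_ ?_ <;> intros <;>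
    simp only [standardSymplecticForm, Pi.add_apply, Pi.smul_apply, smul_eq_mul,
      ← Finset.sum_add_distrib, Finset.mul_sum] <;>
    exact Finset.sum_congr rfl fun _ _ => by ring

theorem standardSymplecticBilinForm_isAlt : (standardSymplecticBilinForm p g).IsAlt :=
  fun x => by simp [standardSymplecticBilinForm, standardSymplecticForm, mul_comm]

variable {p g}

theorem IsPrimitiveLattice.dualSubmodule_eq {L : Submodule ℤ_[p] ((Fin g ⊕ Fin g) → ℚ_[p])}
    (h : IsPrimitiveLattice p g L) : (standardSymplecticBilinForm p g).dualSubmodule L = L := by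
  obtain ⟨e, f, hee, hff, hef, rfl⟩ := h
  refine LinearMap.BilinForm.dualSubmodule_span_symplecticBasis _
    (standardSymplecticBilinForm_isAlt p g) ?_ hee hff hef
  simp [two_mul]

end Padic

theorem primitive_lattice_not_strictly_nested_general (p : ℕ) [Fact p.Prime] (g : ℕ)
    (L₁ L₂ : Submodule ℤ_[p] ((Fin g ⊕ Fin g) → ℚ_[p]))
    (h₁ : IsPrimitiveLattice p g L₁) (h₂ : IsPrimitiveLattice p g L₂)
    (hle : L₁ ≤ L₂) : L₁ = L₂ := by
  let B := standardSymplecticBilinForm p g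
  refine le_antisymm hle ?_
  calc L₂ = B.dualSubmodule L₂ := h₂.dualSubmodule_eq.symm
    _ ≤ B.dualSubmodule L₁ := B.dualSubmodule_anti hle
    _ = L₁ := h₁.dualSubmodule_eq

/-- No primitive lattice strictly contains another primitive lattice. -/
theorem primitive_lattice_not_strictly_nested (p : ℕ) [Fact p.Prime] (g : ℕ) (hg : 1 ≤ g)
    (L₁ L₂ : Submodule ℤ_[p] ((Fin g ⊕ Fin g) → ℚ_[p]))
    (h₁ : IsPrimitiveLattice p g L₁) (h₂ : IsPrimitiveLattice p g L₂)
    (hle : L₁ ≤ L₂) : L₁ = L₂ :=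
  primitive_lattice_not_strictly_nested_general p g L₁ L₂ h₁ h₂ hle
end

section
/- Fix integers i₀ and i₃ with 1 ≤ i₀ and i₀ + 80 ≤ i₃, and define T : ℕ → ℕ by T(x) = max(1, ⌈(80·x − i₃)/79⌉), where the ceiling is taken of the rational number (80·x − i₃)/79 (which may be negative) and the result is clamped below by 1. Then for every natural number m with (m : ℝ) ≥ Real.logb (80/79) ((i₃ − 80 : ℝ)/(i₃ − i₀ − 79 : ℝ)), the m-fold iterate satisfies T^[m] (i₀) = 1. -/
/-!
Write `c = i₃ - 79` and `r = 80/79`. Up to the ceiling, `T` is the affine map `x ↦ c + r (x - c)`,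
which fixes `c` and pushes points below `c` away from it by the factor `r`; clamped below at `1`
this map is monotone and dominates `T`. Hence `T^[m] i₀ ≤ max 1 (c - r^m (c - i₀))`, and the
hypothesis on `m` says exactly that `r^m (c - i₀) ≥ c - 1`.
-/

/-- The color-shrinking map `T(x) = max(1, ⌈(80x − i₃)/79⌉)`. -/
def colorShrink (i₃ : ℕ) (x : ℕ) : ℕ :=
  max 1 (⌈(80 * (x : ℚ) - (i₃ : ℚ)) / 79⌉.toNat)

section ClampedAffine

variable {K : Type*} [Field K] [LinearOrder K] [IsStrictOrderedRing K] {c r : K}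

def clampedAffine (c r x : K) : K :=
  max 1 (c + r * (x - c))

lemma clampedAffine_monotone (hr : 0 ≤ r) : Monotone (clampedAffine c r) :=
  fun _ _ hxy => max_le_max le_rfl (by gcongr)

lemma clampedAffine_max_one (hc : 1 ≤ c) (hr : 1 ≤ r) (x : K) :
    clampedAffine c r (max 1 x) = clampedAffine c r x := by
  rcases le_total x 1 with hx | hx
  · have h1 : c + r * (1 - c) ≤ 1 := by nlinarith
    have hx' : c + r * (x - c) ≤ 1 := by nlinarith
    simp only [clampedAffine, max_eq_left hx, max_eq_left h1, max_eq_left hx']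
  · rw [max_eq_right hx]

lemma clampedAffine_iterate_le (hc : 1 ≤ c) (hr : 1 ≤ r) (n : ℕ) (x : K) :
    (clampedAffine c r)^[n] x ≤ max 1 (c + r ^ n * (x - c)) := by
  induction n with
  | zero => simp
  | succ n ih =>
    calc (clampedAffine c r)^[n + 1] x
        = clampedAffine c r ((clampedAffine c r)^[n] x) := Function.iterate_succ_apply' ..
      _ ≤ clampedAffine c r (max 1 (c + r ^ n * (x - c))) :=
        clampedAffine_monotone (by linarith) ih
      _ = max 1 (c + r ^ (n + 1) * (x - c)) := by
        rw [clampedAffine_max_one hc hr, clampedAffine, pow_succ']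
        ring_nf

end ClampedAffine

lemma colorShrink_cast_le (i₃ y : ℕ) :
    (colorShrink i₃ y : ℚ) ≤ clampedAffine ((i₃ : ℚ) - 79) (80 / 79) y := by
  rw [colorShrink, Int.ceil_toNat, Nat.cast_max, Nat.cast_one]
  set q : ℚ := (80 * (y : ℚ) - (i₃ : ℚ)) / 79
  have hq : clampedAffine ((i₃ : ℚ) - 79) (80 / 79) y = max 1 (q + 1) := by
    simp only [clampedAffine, q]; ring_nf
  rw [hq]
  rcases le_or_gt q 0 with hq0 | hq0
  · simp [Nat.ceil_eq_zero.mpr hq0]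
  · exact max_le_max le_rfl (Nat.ceil_lt_add_one hq0.le).le

lemma le_pow_mul_of_logb_div_le {b x y : ℝ} {m : ℕ} (hb : 1 < b) (hx : 0 < x) (hy : 0 < y)
    (h : Real.logb b (x / y) ≤ m) : x ≤ b ^ m * y := by
  rwa [Real.logb_le_iff_le_rpow hb (div_pos hx hy), Real.rpow_natCast, div_le_iff₀ hy] at h

/-- After `m ≥ log_{80/79}((i₃ − 80)/(i₃ − i₀ − 79))` iterations, the color-shrinking map
sends `i₀` to `1`. -/
theorem colorShrink_iterate_eq_one (i₀ i₃ : ℕ) (h₀ : 1 ≤ i₀) (h₃ : i₀ + 80 ≤ i₃)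
    (m : ℕ)
    (hm : (m : ℝ) ≥ Real.logb (80 / 79) (((i₃ : ℝ) - 80) / ((i₃ : ℝ) - (i₀ : ℝ) - 79))) :
    (colorShrink i₃)^[m] i₀ = 1 := by
  have hgrowth : (i₃ : ℚ) - 80 ≤ (80 / 79) ^ m * ((i₃ : ℚ) - i₀ - 79) := by
    have h₀' : (1 : ℝ) ≤ i₀ := by exact_mod_cast h₀
    have h₃' : (i₀ : ℝ) + 80 ≤ i₃ := by exact_mod_cast h₃
    rw [← Rat.cast_le (K := ℝ)]
    push_cast
    exact le_pow_mul_of_logb_div_le (by norm_num) (by linarith) (by linarith) hm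
  have hc : (1 : ℚ) ≤ (i₃ : ℚ) - 79 := by
    rw [le_sub_iff_add_le]
    exact_mod_cast (by omega : 1 + 79 ≤ i₃)
  have hbound :
      ((colorShrink i₃)^[m] i₀ : ℚ) ≤ (clampedAffine ((i₃ : ℚ) - 79) (80 / 79))^[m] i₀ :=
    (clampedAffine_monotone (by norm_num)).le_iterate_comp_of_le
      (fun y => colorShrink_cast_le i₃ y) m i₀
  have hle : ((colorShrink i₃)^[m] i₀ : ℚ) ≤ 1 :=
    hbound.trans <| (clampedAffine_iterate_le hc (by norm_num) m _).trans <|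
      max_le le_rfl (by linarith)
  have hge : 1 ≤ (colorShrink i₃)^[m] i₀ :=
    Set.MapsTo.iterate (f := colorShrink i₃) (s := Set.Ici 1)
      (fun _ _ => Set.mem_Ici.mpr (le_max_left _ _)) m h₀
  exact le_antisymm (by exact_mod_cast hle) hge
end

section
/- Let X : SimpleGraph V be a simple graph and let a group G act on V by automorphisms of X. Assume the action is proper: for every γ ∈ G with γ ≠ 1 and every vertex v, every walk in X from v to γ • v has length at least 4. Let k be a natural number and v : Fin k → V a family of vertices whose orbits are pairwise distinct (for a ≠ b there is no γ ∈ G with γ • v a = v b) and pairwise orbit-adjacent (for all a ≠ b there exist γ, δ ∈ G with X.Adj (γ • v a) (δ • v b)). Then there exists a family w : Fin k → V with w a in the orbit of v a for every a (∃ γ, w a = γ • v a) such that X.Adj (w a) (w b) for all a ≠ b, i.e. the orbit classes lift to a clique in X. -/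
/-!
Fix a base vertex `c` in the first orbit and move every other representative to a neighbour
of `c`. Two such neighbours `γ • x` and `δ • y` are then adjacent: their orbits contain an
edge `γ • x ~ ε • y`, and `δ • y ~ c ~ γ • x ~ ε • y` is a walk of length `3` between two
points of the orbit of `y`, so properness forces `ε = δ`.
-/

namespace SimpleGraph

variable {V G : Type*} [Group G] [MulAction G V] {X : SimpleGraph V}

@[simps]
def smulHom (hadj : ∀ (γ : G) (u v : V), X.Adj u v → X.Adj (γ • u) (γ • v)) (γ : G) :
    X →g X :=
  ⟨(γ • ·), hadj γ _ _⟩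

theorem adj_smul_of_adj_smul_smul
    (hadj : ∀ (γ : G) (u v : V), X.Adj u v → X.Adj (γ • u) (γ • v))
    {x y : V} {α β : G} (h : X.Adj (α • x) (β • y)) (γ : G) :
    X.Adj (γ • x) ((γ * α⁻¹ * β) • y) := by
  simpa [mul_smul] using hadj (γ * α⁻¹) _ _ h

theorem eq_of_walk_smul_length_lt_four
    (hadj : ∀ (γ : G) (u v : V), X.Adj u v → X.Adj (γ • u) (γ • v))
    (hproper : ∀ γ : G, γ ≠ 1 → ∀ (v : V) (w : X.Walk v (γ • v)), 4 ≤ w.length)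
    {γ δ : G} {u : V} (p : X.Walk (γ • u) (δ • u)) (hp : p.length < 4) : γ = δ := by
  by_contra hγδ
  have hne : γ⁻¹ * δ ≠ 1 := fun h => hγδ (inv_mul_eq_one.mp h)
  have h4 := hproper _ hne u <|
    (p.map (smulHom hadj γ⁻¹)).copy (by simp) (by simp [mul_smul])
  rw [Walk.length_copy, Walk.length_map] at h4
  omega

theorem adj_of_adj_of_adj_of_adj_smul_smul
    (hadj : ∀ (γ : G) (u v : V), X.Adj u v → X.Adj (γ • u) (γ • v))
    (hproper : ∀ γ : G, γ ≠ 1 → ∀ (v : V) (w : X.Walk v (γ • v)), 4 ≤ w.length)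
    {c x y : V} {α β γ δ : G} (hx : X.Adj c (γ • x)) (hy : X.Adj c (δ • y))
    (h : X.Adj (α • x) (β • y)) : X.Adj (γ • x) (δ • y) := by
  have hxy := adj_smul_of_adj_smul_smul hadj h γ
  have hδ : δ = γ * α⁻¹ * β :=
    eq_of_walk_smul_length_lt_four hadj hproper
      (.cons hy.symm (.cons hx (.cons hxy .nil))) (by simp)
  rwa [hδ]

theorem exists_adj_lift_of_pairwise_adj_orbits
    (hadj : ∀ (γ : G) (u v : V), X.Adj u v → X.Adj (γ • u) (γ • v))
    (hproper : ∀ γ : G, γ ≠ 1 → ∀ (v : V) (w : X.Walk v (γ • v)), 4 ≤ w.length)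
    {ι : Type*} (v : ι → V)
    (horbadj : Pairwise fun a b => ∃ γ δ : G, X.Adj (γ • v a) (δ • v b)) :
    ∃ w : ι → V, (∀ a, ∃ γ : G, w a = γ • v a) ∧ Pairwise fun a b => X.Adj (w a) (w b) := by
  classical
  rcases isEmpty_or_nonempty ι with _ | ⟨⟨i₀⟩⟩
  · exact ⟨v, isEmptyElim, fun a => isEmptyElim a⟩
  have hnbr : ∀ a, ∃ γ : G, a ≠ i₀ → X.Adj (v i₀) (γ • v a) := by
    intro a
    by_cases ha : a = i₀
    · exact ⟨1, fun h => (h ha).elim⟩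
    · obtain ⟨α, β, h⟩ := horbadj (Ne.symm ha)
      exact ⟨α⁻¹ * β, fun _ => by simpa using adj_smul_of_adj_smul_smul hadj h 1⟩
  choose γ hγ using hnbr
  refine ⟨Function.update (fun a => γ a • v a) i₀ (v i₀), fun a => ?_, fun a b hab => ?_⟩
  · rcases eq_or_ne a i₀ with rfl | ha
    · exact ⟨1, by simp⟩
    · exact ⟨γ a, by simp [ha]⟩
  rcases eq_or_ne a i₀ with rfl | ha
  · simpa [Ne.symm hab] using hγ b (Ne.symm hab)
  rcases eq_or_ne b i₀ with rfl | hb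
  · simpa [hab] using (hγ a hab).symm
  obtain ⟨α, β, h⟩ := horbadj hab
  simpa [ha, hb] using adj_of_adj_of_adj_of_adj_smul_smul hadj hproper (hγ a ha) (hγ b hb) h

end SimpleGraph

theorem proper_action_orbit_clique_lifts_general
    (V G : Type*) [Group G] [MulAction G V] (X : SimpleGraph V)
    (hadj : ∀ (γ : G) (u v : V), X.Adj u v → X.Adj (γ • u) (γ • v))
    (hproper : ∀ γ : G, γ ≠ 1 → ∀ (v : V) (w : X.Walk v (γ • v)), 4 ≤ w.length)
    (k : ℕ) (v : Fin k → V)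
    (horbadj : ∀ a b : Fin k, a ≠ b → ∃ γ δ : G, X.Adj (γ • v a) (δ • v b)) :
    ∃ w : Fin k → V, (∀ a : Fin k, ∃ γ : G, w a = γ • v a) ∧
      ∀ a b : Fin k, a ≠ b → X.Adj (w a) (w b) :=
  SimpleGraph.exists_adj_lift_of_pairwise_adj_orbits hadj hproper v horbadj

/-- If a group acts properly on a graph (every nontrivial element moves every vertex to
distance at least 4), then any family of vertices in pairwise distinct, pairwise adjacent
orbits lifts to a clique: one can choose representatives that are pairwise adjacent. -/
theorem proper_action_orbit_clique_lifts
    (V G : Type*) [Group G] [MulAction G V] (X : SimpleGraph V)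
    (hadj : ∀ (γ : G) (u v : V), X.Adj u v → X.Adj (γ • u) (γ • v))
    (hproper : ∀ γ : G, γ ≠ 1 → ∀ (v : V) (w : X.Walk v (γ • v)), 4 ≤ w.length)
    (k : ℕ) (v : Fin k → V)
    (hdistinct : ∀ a b : Fin k, a ≠ b → ∀ γ : G, γ • v a ≠ v b)
    (horbadj : ∀ a b : Fin k, a ≠ b → ∃ γ δ : G, X.Adj (γ • v a) (δ • v b)) :
    ∃ w : Fin k → V, (∀ a : Fin k, ∃ γ : G, w a = γ • v a) ∧
      ∀ a b : Fin k, a ≠ b → X.Adj (w a) (w b) :=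
  proper_action_orbit_clique_lifts_general V G X hadj hproper k v horbadj
end

section
/- Let X : SimpleGraph V be a simple graph and let a group G act on V by automorphisms of X. Assume the action is proper: for every γ ∈ G with γ ≠ 1 and every vertex v, every walk in X from v to γ • v has length at least 4. Let Q be the quotient graph on the orbit space of the action, in which two orbit classes ⟦u⟧ and ⟦v⟧ are adjacent iff ⟦u⟧ ≠ ⟦v⟧ and there exist representatives u' ∈ ⟦u⟧ and v' ∈ ⟦v⟧ with X.Adj u' v'. Then for every vertex v₀ : V, the map u ↦ ⟦u⟧ restricts to a bijection from the neighbour set of v₀ in X onto the neighbour set of ⟦v₀⟧ in Q. -/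
/-!
A walk of length `1` or `2` joins two distinct neighbours of `v₀`, or `v₀` to one of its
neighbours; by properness its endpoints lie in different orbits, which gives injectivity on
the neighbourhood and that no edge collapses to a loop. Surjectivity only needs that `G`
acts by automorphisms: an edge `u' v'` of `X` with `u'` in the orbit of `v₀` is translated
to an edge at `v₀`.
-/

namespace SimpleGraph

variable {V G : Type*} [Group G] [MulAction G V] {X : SimpleGraph V}

theorem eq_of_orbitRel_of_length_lt {n : ℕ}
    (hproper : ∀ γ : G, γ ≠ 1 → ∀ (v : V) (w : X.Walk v (γ • v)), n ≤ w.length)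
    {u v : V} (w : X.Walk u v) (hw : w.length < n) (huv : MulAction.orbitRel G V u v) :
    u = v := by
  obtain ⟨γ, rfl⟩ := huv
  by_contra hne
  have hγ : γ ≠ 1 := by
    rintro rfl
    exact hne (one_smul G v)
  have := hproper γ hγ v w.reverse
  rw [Walk.length_reverse] at this
  omega

theorem not_orbitRel_of_adj {n : ℕ} (hn : 1 < n)
    (hproper : ∀ γ : G, γ ≠ 1 → ∀ (v : V) (w : X.Walk v (γ • v)), n ≤ w.length)
    {u v : V} (h : X.Adj u v) : ¬MulAction.orbitRel G V u v := fun huv =>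
  h.ne (eq_of_orbitRel_of_length_lt hproper h.toWalk (by simpa using hn) huv)

theorem eq_of_adj_of_adj_of_orbitRel {n : ℕ} (hn : 2 < n)
    (hproper : ∀ γ : G, γ ≠ 1 → ∀ (v : V) (w : X.Walk v (γ • v)), n ≤ w.length)
    {v₀ u u' : V} (hu : X.Adj v₀ u) (hu' : X.Adj v₀ u')
    (huu' : MulAction.orbitRel G V u u') : u = u' :=
  eq_of_orbitRel_of_length_lt hproper (hu.symm.toWalk.append hu'.toWalk) (by simpa using hn) huu'

theorem exists_adj_orbitRel_of_adj
    (hadj : ∀ (γ : G) (u v : V), X.Adj u v → X.Adj (γ • u) (γ • v))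
    {v₀ u' v' : V} (h : X.Adj u' v') (hu' : MulAction.orbitRel G V u' v₀) :
    ∃ u, X.Adj v₀ u ∧ MulAction.orbitRel G V u v' := by
  obtain ⟨γ, rfl⟩ := hu'
  refine ⟨γ⁻¹ • v', ?_, γ⁻¹, rfl⟩
  simpa using hadj γ⁻¹ _ _ h

end SimpleGraph

open SimpleGraph in
/-- For a proper group action on a graph, the quotient map to the orbit-space graph
restricts to a bijection from the neighbourhood of any vertex onto the neighbourhood of
its orbit class: the quotient map is a covering map. -/
theorem proper_action_quotient_map_is_local_iso
    (V G : Type*) [Group G] [MulAction G V] (X : SimpleGraph V)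
    (hadj : ∀ (γ : G) (u v : V), X.Adj u v → X.Adj (γ • u) (γ • v))
    (hproper : ∀ γ : G, γ ≠ 1 → ∀ (v : V) (w : X.Walk v (γ • v)), 4 ≤ w.length)
    (Q : SimpleGraph (Quotient (MulAction.orbitRel G V)))
    (hQ : ∀ x y : Quotient (MulAction.orbitRel G V),
      Q.Adj x y ↔ x ≠ y ∧ ∃ u' v' : V,
        Quotient.mk (MulAction.orbitRel G V) u' = x ∧
        Quotient.mk (MulAction.orbitRel G V) v' = y ∧ X.Adj u' v')
    (v₀ : V) :
    Set.BijOn (fun u : V => Quotient.mk (MulAction.orbitRel G V) u)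
      (X.neighborSet v₀)
      (Q.neighborSet (Quotient.mk (MulAction.orbitRel G V) v₀)) := by
  refine ⟨fun u hu => ?_, fun u hu u' hu' h => ?_, fun y hy => ?_⟩
  · refine (hQ _ _).2 ⟨fun h => ?_, v₀, u, rfl, rfl, hu⟩
    exact not_orbitRel_of_adj (by norm_num) hproper hu (Quotient.exact h)
  · exact eq_of_adj_of_adj_of_orbitRel (by norm_num) hproper hu hu' (Quotient.exact h)
  · obtain ⟨-, u', v', hu', rfl, hA⟩ := (hQ _ _).1 hy
    obtain ⟨u, hu, huv⟩ := exists_adj_orbitRel_of_adj hadj hA (Quotient.exact hu')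
    exact ⟨u, hu, Quotient.sound huv⟩
end
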